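/- arXiv:1302.3360 — 3 statements merged into one kernel-verified Lean document; each statement's English description precedes it below -/
import Mathlib

section
/- Let F be a field, f : F^n → F^m a polynomial mapping with m ≥ n+1 ≥ 2, and let A^d_hom(f) denote the quotient of the space of homogeneous degree-d polynomials on F^m by the subspace of those vanishing on the image f(F^n). If for some d ≥ 1 one has dim A^d_hom(f) ≥ dim Pol^{rd}_hom(F^s) + 1, where Pol^{rd}_hom(F^s) is the space of homogeneous polynomials of degree rd in s variables, then f is (s,r)-weakly elusive: the image of f is not contained in the image of any homogeneous polynomial mapping Γ : F^s → F^m of degree r. -/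
open MvPolynomial

/-- `g : F^s → F^κ` is a homogeneous polynomial mapping of degree `r`. -/
def IsHomPolyMap (F : Type*) [CommSemiring F] (s : ℕ) {κ : Type*} (r : ℕ)
    (g : (Fin s → F) → κ → F) : Prop :=
  ∃ p : κ → MvPolynomial (Fin s) F,
    (∀ i, (p i).IsHomogeneous r) ∧ ∀ x i, g x i = eval x (p i)

/-- `g : F^s → F^κ` is a polynomial mapping of degree at most `r`. -/
def IsPolyMapDeg (F : Type*) [CommSemiring F] (s : ℕ) {κ : Type*} (r : ℕ)
    (g : (Fin s → F) → κ → F) : Prop :=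
  ∃ p : κ → MvPolynomial (Fin s) F,
    (∀ i, (p i).totalDegree ≤ r) ∧ ∀ x i, g x i = eval x (p i)

/-- `f` is `(s,r)`-weakly elusive. -/
def WeaklyElusive {F : Type*} [CommSemiring F] {n : ℕ} {κ : Type*}
    (f : (Fin n → F) → κ → F) (s r : ℕ) : Prop :=
  ∀ g : (Fin s → F) → κ → F, IsHomPolyMap F s r g → ¬ Set.range f ⊆ Set.range g

/-- `f` is `(s,r)`-elusive. -/
def Elusive {F : Type*} [CommSemiring F] {n : ℕ} {κ : Type*}
    (f : (Fin n → F) → κ → F) (s r : ℕ) : Prop :=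
  ∀ g : (Fin s → F) → κ → F, IsPolyMapDeg F s r g → ¬ Set.range f ⊆ Set.range g

/-- The subspace of `Pol^d_hom(F^m)` of homogeneous degree-`d` polynomials vanishing on `S`. -/
def vanishingOn {F : Type*} [CommRing F] {m : ℕ} (S : Set (Fin m → F)) (d : ℕ) :
    Submodule F (homogeneousSubmodule (Fin m) F d) where
  carrier := {p | ∀ x ∈ S, eval x (p : MvPolynomial (Fin m) F) = 0}
  add_mem' := by
    intro a b ha hb x hx
    simp [ha x hx, hb x hx]
  zero_mem' := by intro x hx; simp
  smul_mem' := by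
    intro c a ha x hx
    simp [ha x hx]

/-- `A^d_hom(f)`, the quotient of `Pol^d_hom(F^m)` by the homogeneous degree-`d` polynomials
vanishing on the image of `f`. -/
abbrev Ahom {F : Type*} [CommRing F] {n m : ℕ} (f : (Fin n → F) → Fin m → F) (d : ℕ) :=
  (homogeneousSubmodule (Fin m) F d) ⧸ vanishingOn (Set.range f) d

instance MvPolynomial.finite_homogeneousSubmodule (σ R : Type*) [CommSemiring R] [Finite σ]
    (n : ℕ) : Module.Finite R (homogeneousSubmodule σ R n) :=
  Module.Finite.iff_fg.mpr (homogeneousSubmodule_fg σ R n)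

theorem LinearMap.finrank_quotient_le_of_ker_le {K V W : Type*} [DivisionRing K]
    [AddCommGroup V] [Module K V] [AddCommGroup W] [Module K W]
    [Module.Finite K V] [Module.Finite K W] (Φ : V →ₗ[K] W) {U : Submodule K V}
    (h : LinearMap.ker Φ ≤ U) :
    Module.finrank K (V ⧸ U) ≤ Module.finrank K W :=
  calc Module.finrank K (V ⧸ U)
      ≤ Module.finrank K (V ⧸ LinearMap.ker Φ) :=
        LinearMap.finrank_le_finrank_of_surjective (Submodule.factor_surjective h)
    _ = Module.finrank K (LinearMap.range Φ) := Φ.quotKerEquivRange.finrank_eq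
    _ ≤ Module.finrank K W := Submodule.finrank_le _

section Pullback

variable {R σ τ : Type*} [CommRing R] {r : ℕ}

/-- The paper's `Γ*` for `Γ = fun y i => eval y (p i)`. -/
noncomputable def homogeneousPullback (p : σ → MvPolynomial τ R)
    (hp : ∀ i, (p i).IsHomogeneous r) (d : ℕ) :
    homogeneousSubmodule σ R d →ₗ[R] homogeneousSubmodule τ R (r * d) :=
  (aeval p).toLinearMap.restrict fun _ hq => IsHomogeneous.aeval hq p hp

theorem vanishingOn_anti {m : ℕ} {S T : Set (Fin m → R)} (hST : S ⊆ T) (d : ℕ) :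
    vanishingOn T d ≤ vanishingOn S d :=
  fun _ hq x hx => hq x (hST hx)

theorem ker_homogeneousPullback_le_vanishingOn_range {m : ℕ} (p : Fin m → MvPolynomial τ R)
    (hp : ∀ i, (p i).IsHomogeneous r) (d : ℕ) :
    LinearMap.ker (homogeneousPullback p hp d) ≤
      vanishingOn (Set.range fun y i => eval y (p i)) d := by
  rintro q hq _ ⟨y, rfl⟩
  have hq0 : aeval p (q : MvPolynomial (Fin m) R) = 0 :=
    congrArg Subtype.val (LinearMap.mem_ker.mp hq)
  calc eval (fun i => eval y (p i)) (q : MvPolynomial (Fin m) R)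
      = eval y (aeval p (q : MvPolynomial (Fin m) R)) := (aeval_bind₁ y p q).symm
    _ = 0 := by rw [hq0, map_zero]

end Pullback

theorem stmt3_general {F : Type*} [Field F] {n m s r d : ℕ}
    (f : (Fin n → F) → Fin m → F)
    (hdim : Module.finrank F (homogeneousSubmodule (Fin s) F (r * d)) + 1 ≤
      Module.finrank F (Ahom f d)) :
    WeaklyElusive f s r := by
  rintro g ⟨p, hp, hgp⟩ hsub
  obtain rfl : g = fun y i => eval y (p i) := funext₂ hgp
  have hker : LinearMap.ker (homogeneousPullback p hp d) ≤ vanishingOn (Set.range f) d :=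
    (ker_homogeneousPullback_le_vanishingOn_range p hp d).trans (vanishingOn_anti hsub d)
  have hle : Module.finrank F (Ahom f d) ≤
      Module.finrank F (homogeneousSubmodule (Fin s) F (r * d)) :=
    (homogeneousPullback p hp d).finrank_quotient_le_of_ker_le hker
  omega

/-- Counting criterion: if `dim A^d_hom(f) ≥ dim Pol^{rd}_hom(F^s) + 1` for some `d ≥ 1`, then
`f` is `(s,r)`-weakly elusive. -/
theorem stmt3 {F : Type*} [Field F] {n m s r d : ℕ}
    (hm : n + 1 ≤ m) (hn : 1 ≤ n)
    (f : (Fin n → F) → Fin m → F) (hf : ∃ e, IsPolyMapDeg F n e f)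
    (hd : 1 ≤ d)
    (hdim : Module.finrank F (homogeneousSubmodule (Fin s) F (r * d)) + 1 ≤
      Module.finrank F (Ahom f d)) :
    WeaklyElusive f s r :=
  stmt3_general f hdim
end

section
/- The Veronese mapping ν_k : C^n → C^N, N = binomial(n-1+k, k), sending (x_1,...,x_n) to the tuple of all degree-k monomials in x_1,...,x_n, is (s,r)-weakly elusive whenever there exists d ≥ 1 with binomial(dk + n - 1, dk) ≥ binomial(rd + s - 1, rd) + 1. -/
/-! If the image of `ν_k` lay in the image of a homogeneous map `g = (p_i)` of degree `r` from
`ℂ^s`, write `ν_k = g ∘ y`. For `q` homogeneous of degree `d`, `q ∘ ν_k = (q ∘ p) ∘ y` with `q ∘ p`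
homogeneous of degree `rd` in `s` variables, so `dim A^d_hom(ν_k) ≤ C(rd + s - 1, rd)`. On the other
hand every monomial of degree `dk` is a product of `d` monomials of degree `k`, so `A^d_hom(ν_k)` is
the space of all homogeneous polynomial functions of degree `dk` on `ℂⁿ`, which has dimension
`C(dk + n - 1, dk)` because `ℂ` is infinite. -/

open MvPolynomial

/-- The index type of degree-`k` monomials in `n` variables
(so that `#(monomialIdx n k) = C(n-1+k, k)`). -/
def monomialIdx (n k : ℕ) : Type :=
  {d : Fin n →₀ ℕ // (d.sum fun _ e => e) = k}

/-- The Veronese mapping of degree `k`, sending `x` to the tuple of all degree-`k`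
monomials in `x₁, …, xₙ`. -/
noncomputable def veronese (n k : ℕ) : (Fin n → ℂ) → monomialIdx n k → ℂ :=
  fun x d => ∏ i, x i ^ (d.1 i)
open Module

namespace MvPolynomial

variable {R σ : Type*} [CommSemiring R]

theorem map_aeval_homogeneousSubmodule {ι : Type*} {P : ι → MvPolynomial σ R} {k : ℕ}
    (hP : Submodule.span R (Set.range P) = homogeneousSubmodule σ R k) (d : ℕ) :
    (homogeneousSubmodule ι R d).map (aeval P).toLinearMap = homogeneousSubmodule σ R (k * d) := by
  -- `homogeneousSubmodule σ R d = homogeneousSubmodule σ R 1 ^ d`, and `aeval P` is multiplicative.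
  have hone : (homogeneousSubmodule ι R 1).map (aeval P).toLinearMap =
      homogeneousSubmodule σ R 1 ^ k := by
    rw [homogeneousSubmodule_one_eq_span_X, Submodule.map_span, ← Set.range_comp,
      homogeneousSubmodule_one_pow, ← hP]
    congr 2
    ext i
    simp
  rw [← homogeneousSubmodule_one_pow, Submodule.map_pow, hone, ← pow_mul,
    homogeneousSubmodule_one_pow]

instance {K : Type*} [Field K] [Finite σ] (m : ℕ) :
    Module.Finite K (homogeneousSubmodule σ K m) :=
  Module.Finite.iff_fg.mpr (homogeneousSubmodule_fg σ K m)

theorem finrank_homogeneousSubmodule {K : Type*} [Field K] [Finite σ] (m : ℕ) :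
    finrank K (homogeneousSubmodule σ K m) = (Nat.card σ + m - 1).choose m := by
  rw [homogeneousSubmodule_eq_finsupp_supported,
    Module.finrank_eq_nat_card_basis
      (Finsupp.basisSingleOne.map (AddMonoidAlgebra.supportedEquivFinsupp _).symm),
    ← Sym.natCard_sym_eq_choose]
  classical
  exact Nat.card_congr (Sym.equivNatSum σ m).symm

end MvPolynomial

section Pullback

variable {F X κ : Type*} [CommSemiring F]

noncomputable def polyPullback (f : X → κ → F) : MvPolynomial κ F →ₐ[F] (X → F) :=
  AlgHom.pi fun x => aeval (f x)

@[simp]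
theorem polyPullback_apply (f : X → κ → F) (q : MvPolynomial κ F) (x : X) :
    polyPullback f q x = aeval (f x) q :=
  rfl

/-- The space `A^d_hom(f)` of the paper. -/
noncomputable def homPullback (f : X → κ → F) (d : ℕ) : Submodule F (X → F) :=
  (homogeneousSubmodule κ F d).map (polyPullback f).toLinearMap

theorem IsHomPolyMap.homPullback_comp_le {s r : ℕ} {g : (Fin s → F) → κ → F}
    (hg : IsHomPolyMap F s r g) (y : X → Fin s → F) (d : ℕ) :
    homPullback (g ∘ y) d ≤ homPullback y (r * d) := by
  obtain ⟨p, hp, hgp⟩ := hg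
  rintro _ ⟨q, hq, rfl⟩
  refine ⟨aeval p q, hq.aeval p hp, funext fun x => ?_⟩
  simp only [AlgHom.toLinearMap_apply, polyPullback_apply, Function.comp_apply]
  rw [← AlgHom.comp_apply, comp_aeval]
  congr
  funext i
  simp [hgp]

theorem finrank_homPullback_le {K : Type*} [Field K] [Finite κ] (f : X → κ → K) (d : ℕ) :
    finrank K (homPullback f d) ≤ finrank K (homogeneousSubmodule κ K d) :=
  Submodule.finrank_map_le _ _

instance {K : Type*} [Field K] [Finite κ] (f : X → κ → K) (d : ℕ) :
    Module.Finite K (homPullback f d) :=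
  Module.Finite.map _ _

theorem polyPullback_id_injective {K σ : Type*} [Field K] [Infinite K] :
    Function.Injective (polyPullback (id : (σ → K) → σ → K)) :=
  fun _ _ hpq => MvPolynomial.funext fun x => congrFun hpq x

end Pullback

theorem WeaklyElusive.of_finrank_lt {K κ : Type*} [Field K] {n s r : ℕ}
    {f : (Fin n → K) → κ → K} (d : ℕ)
    (h : finrank K (homogeneousSubmodule (Fin s) K (r * d)) < finrank K (homPullback f d)) :
    WeaklyElusive f s r := by
  intro g hg hsub
  choose y hy using fun x => hsub (Set.mem_range_self x)
  have hf : f = g ∘ y := funext fun x => (hy x).symm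
  have hle := Submodule.finrank_mono (hf ▸ hg.homPullback_comp_le y d)
  exact absurd (hle.trans (finrank_homPullback_le y (r * d))) h.not_ge

theorem span_range_monomial_monomialIdx (R : Type*) [CommSemiring R] (n k : ℕ) :
    Submodule.span R (Set.range fun μ : monomialIdx n k => monomial μ.1 (1 : R)) =
      homogeneousSubmodule (Fin n) R k := by
  rw [homogeneousSubmodule_eq_finsupp_supported, AddMonoidAlgebra.supported_eq_span_single]
  congr 1
  ext P
  simp only [Set.mem_range, Set.mem_image, Subtype.exists, monomialIdx, Finsupp.degree_apply,
    Finsupp.sum, exists_prop]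
  rfl

theorem polyPullback_veronese (n k : ℕ) :
    polyPullback (veronese n k) =
      (polyPullback id).comp (aeval fun μ : monomialIdx n k => monomial μ.1 1) := by
  ext μ x
  simp [veronese, eval_monomial, Finsupp.prod_fintype]

theorem homPullback_veronese (n k d : ℕ) :
    homPullback (veronese n k) d =
      (homogeneousSubmodule (Fin n) ℂ (k * d)).map (polyPullback id).toLinearMap := by
  rw [homPullback, polyPullback_veronese, AlgHom.comp_toLinearMap, Submodule.map_comp,
    map_aeval_homogeneousSubmodule (span_range_monomial_monomialIdx ℂ n k)]

theorem finrank_homPullback_veronese (n k d : ℕ) :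
    finrank ℂ (homPullback (veronese n k) d) = (n + k * d - 1).choose (k * d) := by
  rw [homPullback_veronese,
    ← (Submodule.equivMapOfInjective _ polyPullback_id_injective _).finrank_eq,
    finrank_homogeneousSubmodule, Nat.card_fin]

theorem stmt5_general (n k s r : ℕ)
    (h : ∃ d, 1 ≤ d ∧
      Nat.choose (r * d + s - 1) (r * d) + 1 ≤ Nat.choose (d * k + n - 1) (d * k)) :
    WeaklyElusive (veronese n k) s r := by
  obtain ⟨d, -, hcount⟩ := h
  refine WeaklyElusive.of_finrank_lt d ?_
  rw [finrank_homPullback_veronese, finrank_homogeneousSubmodule, Nat.card_fin,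
    add_comm n, add_comm s, mul_comm k]
  omega

/-- The Veronese mapping `ν_k : ℂⁿ → ℂ^{C(n-1+k,k)}` is `(s,r)`-weakly elusive whenever
there is `d ≥ 1` with `C(dk + n - 1, dk) ≥ C(rd + s - 1, rd) + 1`. -/
theorem stmt5 (n k s r : ℕ) (hn : 1 ≤ n) (hk : 1 ≤ k)
    (h : ∃ d, 1 ≤ d ∧
      Nat.choose (r * d + s - 1) (r * d) + 1 ≤ Nat.choose (d * k + n - 1) (d * k)) :
    WeaklyElusive (veronese n k) s r :=
  stmt5_general n k s r h
end

section
/- Let F be a field with char(F) = 0 (or r ≤ char(F) - 1), and suppose m·binomial(s+r-1, r) + k·s ≤ mk - 1. Then the image of the evaluation map Ev^r_{s,m,k} : (Pol^r_hom(F^s)^*)^m × (F^s)^k → F^{mk} is contained in a proper Zariski-closed subset of F^{mk}; in particular, when F is infinite, there exists a k-tuple of points in F^m that is (s,r)-weakly elusive. -/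
open MvPolynomial

/-- A `k`-tuple `b` of points of `F^m` is `(s,r)`-weakly elusive if no homogeneous polynomial
mapping `F^s → F^m` of degree `r` contains all the points `b j` in its image. -/
def TupleWeaklyElusive {F : Type*} [CommSemiring F] {m k : ℕ}
    (b : Fin k → Fin m → F) (s r : ℕ) : Prop :=
  ∀ g : (Fin s → F) → Fin m → F, IsHomPolyMap F s r g → ¬ ∀ j, b j ∈ Set.range g

/-- The evaluation map `Ev^r_{s,m,k}`, sending an `m`-tuple of polynomials on `F^s` together
with `k` points of `F^s` to the `m × k` matrix of evaluations. -/
noncomputable def Ev (F : Type*) [CommSemiring F] (s m k : ℕ) :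
    (Fin m → MvPolynomial (Fin s) F) × (Fin k → Fin s → F) → (Fin m → Fin k → F) :=
  fun pa i j => eval (pa.2 j) (pa.1 i)

/-!
Each entry of the evaluation matrix of `m` forms of degree `r` on `F^s` at `k` points is one fixed
polynomial in the `m·C(s+r-1,r)` coefficients and the `k·s` coordinates. When there are fewer of
these parameters than the `mk` entries, the `mk` entry polynomials are algebraically dependent,
because a polynomial ring has transcendence degree equal to its number of variables. A nonzero
relation among them vanishes on the image of `Ev`. Over an infinite field the relation is nonzero
at some matrix, and the columns of that matrix form a weakly elusive tuple.
-/

open Finset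

namespace MvPolynomial

theorem exists_ne_zero_aeval_eq_zero_of_card_lt {R ι σ : Type*} [CommRing R] [IsDomain R]
    [Fintype ι] [Fintype σ] (hcard : Fintype.card σ < Fintype.card ι)
    (P : ι → MvPolynomial σ R) :
    ∃ q : MvPolynomial ι R, q ≠ 0 ∧ aeval P q = 0 := by
  by_contra! hP
  have hindep : AlgebraicIndependent R P :=
    algebraicIndependent_iff.mpr fun q hq => by_contra fun hq0 => hP q hq0 hq
  have htrdeg := hindep.lift_cardinalMk_le_trdeg
  rw [trdeg_of_isDomain, Cardinal.lift_lift, Cardinal.mk_fintype, Cardinal.mk_fintype,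
    Cardinal.lift_natCast, Cardinal.lift_natCast, Nat.cast_le] at htrdeg
  exact hcard.not_ge htrdeg

theorem IsHomogeneous.eval_eq_sum_finsuppAntidiag {R σ : Type*} [CommSemiring R] [Fintype σ]
    [DecidableEq σ] {r : ℕ} {p : MvPolynomial σ R} (hp : p.IsHomogeneous r) (x : σ → R) :
    eval x p = ∑ d ∈ (univ : Finset σ).finsuppAntidiag r, coeff d p * ∏ t, x t ^ d t := by
  rw [eval_eq']
  refine sum_subset (fun d hd => ?_) (fun d _ hd => ?_)
  · rw [mem_finsuppAntidiag, ← Finsupp.degree_eq_sum, Finsupp.degree_apply,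
      ← hp.degree_eq_sum_deg_support hd]
    exact ⟨rfl, subset_univ _⟩
  · rw [notMem_support_iff.mp hd, zero_mul]

section GenericEvaluation

variable (R ι κ σ : Type*) [CommSemiring R] [Fintype σ] [DecidableEq σ] (r : ℕ)

/-- Parameters of `ι` forms of degree `r` in the variables `σ` and of `κ` points of `σ → R`:
a coefficient for each form and monomial of degree `r`, a coordinate for each point and axis. -/
abbrev GenericEvalVars : Type _ :=
  (ι × (univ : Finset σ).finsuppAntidiag r) ⊕ (κ × σ)

noncomputable def genericEval (ij : ι × κ) : MvPolynomial (GenericEvalVars ι κ σ r) R :=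
  ∑ d : (univ : Finset σ).finsuppAntidiag r,
    X (.inl (ij.1, d)) * ∏ t, X (.inr (ij.2, t)) ^ (d : σ →₀ ℕ) t

variable {R ι κ σ r}

def genericEvalPoint (p : ι → MvPolynomial σ R) (a : κ → σ → R) :
    GenericEvalVars ι κ σ r → R :=
  Sum.elim (fun id => coeff id.2 (p id.1)) (fun jt => a jt.1 jt.2)

theorem eval_genericEval {p : ι → MvPolynomial σ R} (hp : ∀ i, (p i).IsHomogeneous r)
    (a : κ → σ → R) (ij : ι × κ) :
    eval (genericEvalPoint p a) (genericEval R ι κ σ r ij) = eval (a ij.2) (p ij.1) := by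
  rw [(hp ij.1).eval_eq_sum_finsuppAntidiag, ← sum_coe_sort]
  simp [genericEval, genericEvalPoint]

theorem card_genericEvalVars [Fintype ι] [Fintype κ] :
    Fintype.card (GenericEvalVars ι κ σ r) =
      Fintype.card ι * (Fintype.card σ + r - 1).choose r + Fintype.card κ * Fintype.card σ := by
  simp [card_finsuppAntidiag_nat_eq_choose]

end GenericEvaluation

theorem exists_ne_zero_forall_isHomogeneous_eval_eq_zero {R ι κ σ : Type*} [CommRing R]
    [IsDomain R] [Fintype ι] [Fintype κ] [Fintype σ] [DecidableEq σ] {r : ℕ}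
    (hcard : Fintype.card ι * (Fintype.card σ + r - 1).choose r + Fintype.card κ * Fintype.card σ
      < Fintype.card ι * Fintype.card κ) :
    ∃ q : MvPolynomial (ι × κ) R, q ≠ 0 ∧ ∀ (p : ι → MvPolynomial σ R) (a : κ → σ → R),
      (∀ i, (p i).IsHomogeneous r) → eval (fun ij => eval (a ij.2) (p ij.1)) q = 0 := by
  rw [← card_genericEvalVars, ← Fintype.card_prod] at hcard
  obtain ⟨q, hq0, hq⟩ := exists_ne_zero_aeval_eq_zero_of_card_lt hcard (genericEval R ι κ σ r)
  refine ⟨q, hq0, fun p a hp => ?_⟩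
  calc eval (fun ij => eval (a ij.2) (p ij.1)) q
      = eval (fun ij => eval (genericEvalPoint p a) (genericEval R ι κ σ r ij)) q := by
        simp only [eval_genericEval hp]
    _ = eval (genericEvalPoint p a) (bind₁ (genericEval R ι κ σ r) q) :=
        (eval₂Hom_bind₁ _ _ _ _).symm
    _ = 0 := by rw [← aeval_eq_bind₁, hq, map_zero]

end MvPolynomial

theorem tupleWeaklyElusive_of_eval_ne_zero {F : Type*} [CommSemiring F] {s m k r : ℕ}
    {q : MvPolynomial (Fin m × Fin k) F}
    (hq : ∀ (p : Fin m → MvPolynomial (Fin s) F) (a : Fin k → Fin s → F),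
      (∀ i, (p i).IsHomogeneous r) → eval (fun ij => eval (a ij.2) (p ij.1)) q = 0)
    {x : Fin m × Fin k → F} (hx : eval x q ≠ 0) :
    TupleWeaklyElusive (fun j i => x (i, j)) s r := by
  rintro g ⟨p, hp, hgp⟩ hcover
  choose a ha using hcover
  have hpoint : (fun ij : Fin m × Fin k => eval (a ij.2) (p ij.1)) = x :=
    funext fun ⟨i, j⟩ => by rw [← hgp, ha]
  exact hx (hpoint ▸ hq p a hp)

/-- If `char F = 0` and `m·C(s+r-1,r) + k·s ≤ mk - 1`, then the image of the evaluation map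
`Ev^r_{s,m,k}` lies in a proper Zariski-closed subset of `F^{mk}` (the zero set of a nonzero
polynomial); in particular there is an `(s,r)`-weakly elusive `k`-tuple of points of `F^m`. -/
theorem stmt10 {F : Type*} [Field F] [CharZero F] {s m k r : ℕ}
    (hmk : 1 ≤ m * k)
    (h : m * Nat.choose (s + r - 1) r + k * s ≤ m * k - 1) :
    (∃ q : MvPolynomial (Fin m × Fin k) F, q ≠ 0 ∧
      ∀ pa : (Fin m → MvPolynomial (Fin s) F) × (Fin k → Fin s → F),
        (∀ i, (pa.1 i).IsHomogeneous r) →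
          eval (fun ij => Ev F s m k pa ij.1 ij.2) q = 0) ∧
    ∃ b : Fin k → Fin m → F, TupleWeaklyElusive b s r := by
  obtain ⟨q, hq0, hq⟩ := exists_ne_zero_forall_isHomogeneous_eval_eq_zero (R := F)
    (ι := Fin m) (κ := Fin k) (σ := Fin s) (r := r) (by simp only [Fintype.card_fin]; omega)
  obtain ⟨x, hx⟩ : ∃ x, eval x q ≠ 0 := by
    by_contra! hzero
    exact hq0 (funext fun x => by rw [hzero x, map_zero])
  exact ⟨⟨q, hq0, fun pa => hq pa.1 pa.2⟩, _, tupleWeaklyElusive_of_eval_ne_zero hq hx⟩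
end
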